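/- Let U ⊆ ℝⁿ, n ≥ 2, be a strictly starlike domain with radial function R, and let Ψ : U → ℝ be continuous. For θ ∈ S^{n−1}, say the radial limit Ψ*(θ) ∈ [−∞, +∞] exists if Ψ(ρθ) converges in the extended reals as ρ ↗ R(θ). Let A ⊆ S^{n−1} be the set of all θ for which Ψ*(θ) exists. Then A is a Borel measurable subset of S^{n−1} and the function Ψ* : A → [−∞, +∞] is of Baire class 0 or 1, i.e., Ψ* is the pointwise limit on A of a sequence of functions continuous on A. -/

import Mathlib

open Metric Set Filter Topology MeasureTheory
open scoped NNReal ENNReal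

noncomputable section

abbrev Euc (k : ℕ) := EuclideanSpace ℝ (Fin k)

/-- Second directional derivative of `u` at `x`, twice in the direction `v`. -/
def DirDeriv2 {X : Type*} [NormedAddCommGroup X] [NormedSpace ℝ X]
    (u : X → ℝ) (v : X) (x : X) : ℝ :=
  fderiv ℝ (fun y => fderiv ℝ u y v) x v

/-- Mixed second derivative of `u` at `x` in the directions `v`, `w`. -/
def MixedDeriv2 {X : Type*} [NormedAddCommGroup X] [NormedSpace ℝ X]
    (u : X → ℝ) (v w : X) (x : X) : ℝ :=
  fderiv ℝ (fun y => fderiv ℝ u y w) x v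

/-- The Euclidean Laplacian. -/
def EucLap {k : ℕ} (u : Euc k → ℝ) (x : Euc k) : ℝ :=
  ∑ i, DirDeriv2 u (EuclideanSpace.single i 1) x

/-- `u` is (classically) harmonic on the open set `U` : it is `C²` and `Δ u = 0` on `U`. -/
def HarmOn {k : ℕ} (u : Euc k → ℝ) (U : Set (Euc k)) : Prop :=
  IsOpen U ∧ ContDiffOn ℝ 2 u U ∧ ∀ x ∈ U, EucLap u x = 0

/-- `u : Euc k → EReal` is superharmonic on the open set `W`: it is lower semicontinuous,
`> -∞`, not `≡ +∞` on any component, and dominates on every ball every harmonic function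
which it dominates on the boundary sphere (the classical comparison characterization of
distributional `Δ u ≤ 0`). -/
def SuperharmOn {k : ℕ} (u : Euc k → EReal) (W : Set (Euc k)) : Prop :=
  IsOpen W ∧ LowerSemicontinuousOn u W ∧ (∀ x ∈ W, u x ≠ ⊥) ∧
    (∀ x ∈ W, ∃ y ∈ connectedComponentIn W x, u y ≠ ⊤) ∧
    ∀ (x : Euc k) (r : ℝ), 0 < r → closedBall x r ⊆ W →
      ∀ h : Euc k → ℝ, ContinuousOn h (closedBall x r) → HarmOn h (ball x r) →
        (∀ y ∈ sphere x r, (h y : EReal) ≤ u y) →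
        ∀ y ∈ ball x r, (h y : EReal) ≤ u y

/-- A set `A ⊆ ℝᵏ` is polar: some superharmonic function on an open `W ⊇ A`
is `+∞` on all of `A`. -/
def EucPolar {k : ℕ} (A : Set (Euc k)) : Prop :=
  ∃ (W : Set (Euc k)) (u : Euc k → EReal),
    IsOpen W ∧ A ⊆ W ∧ SuperharmOn u W ∧ ∀ x ∈ A, u x = ⊤

/-- A set `A` is thin at `y`. -/
def EucThinAt {k : ℕ} (A : Set (Euc k)) (y : Euc k) : Prop :=
  y ∉ closure (A \ {y}) ∨
    ∃ W : Set (Euc k), IsOpen W ∧ y ∈ W ∧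
      ∃ u : Euc k → EReal, SuperharmOn u W ∧ u y < Filter.liminf u (𝓝[A \ {y}] y)

/-- A subset `A` of the unit sphere `S^{k-1}` is (spherically) polar, i.e. polar for the
intrinsic potential theory of the round sphere; equivalently (Fuglede), the radial
cone over `A` is polar in `ℝᵏ`. -/
def SphPolar {k : ℕ} (A : Set (Euc k)) : Prop :=
  EucPolar {x : Euc k | x ≠ 0 ∧ ‖x‖⁻¹ • x ∈ A}

/-- The radial function of a set `U`, with values in `[0,+∞]`. -/
def radialE {k : ℕ} (U : Set (Euc k)) (θ : Euc k) : EReal :=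
  sSup ((fun ρ : ℝ => (ρ : EReal)) '' {ρ : ℝ | 0 ≤ ρ ∧ ρ • θ ∈ U})

/-- `U` is a strictly starlike domain (with respect to the origin). -/
def IsStrictStar {k : ℕ} (U : Set (Euc k)) : Prop :=
  IsOpen U ∧ IsConnected U ∧ ∀ p ∈ closure U, ∀ t : ℝ, 0 ≤ t → t < 1 → t • p ∈ U

/-- The filter of real numbers `ρ ↑ c` (for an extended real `c`). -/
def upFilter (c : EReal) : Filter ℝ :=
  Filter.comap (fun ρ : ℝ => (ρ : EReal)) (𝓝[<] c)

/-- The filter of real numbers `ρ ↓ c` (for an extended real `c`). -/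
def downFilter (c : EReal) : Filter ℝ :=
  Filter.comap (fun ρ : ℝ => (ρ : EReal)) (𝓝[>] c)

/-- The filter describing the radial approach `ρ ↗ R(θ)` in a starlike domain. -/
def radialFilter {k : ℕ} (U : Set (Euc k)) (θ : Euc k) : Filter ℝ :=
  upFilter (radialE U θ) ⊓ 𝓟 (Ici (0:ℝ))

/-- A second order partial differential operator
`L = ∑ aᵢⱼ ∂²/∂xᵢ∂xⱼ + ∑ bᵢ ∂/∂xᵢ + c` on a domain `Ω ⊆ ℝᵏ`, with
`aᵢⱼ = aⱼᵢ ∈ C^{2,1}`, `bᵢ ∈ C^{1,1}`, `c ∈ C^{0,1}`, `c ≤ 0`, and `(aᵢⱼ)`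
positive definite on `Ω` (so `L` is elliptic). -/
structure EllipticOp (k : ℕ) (Ω : Set (Euc k)) where
  a : Fin k → Fin k → Euc k → ℝ
  b : Fin k → Euc k → ℝ
  c : Euc k → ℝ
  symm : ∀ i j x, a i j x = a j i x
  a_C2 : ∀ i j, ContDiffOn ℝ 2 (a i j) Ω
  a_lip : ∀ i j, ∀ x ∈ Ω, ∃ t ∈ 𝓝 x, ∃ K : ℝ≥0,
    LipschitzOnWith K (iteratedFDerivWithin ℝ 2 (a i j) Ω) (t ∩ Ω)
  b_C1 : ∀ i, ContDiffOn ℝ 1 (b i) Ω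
  b_lip : ∀ i, ∀ x ∈ Ω, ∃ t ∈ 𝓝 x, ∃ K : ℝ≥0,
    LipschitzOnWith K (iteratedFDerivWithin ℝ 1 (b i) Ω) (t ∩ Ω)
  c_C0 : ContinuousOn c Ω
  c_lip : ∀ x ∈ Ω, ∃ t ∈ 𝓝 x, ∃ K : ℝ≥0, LipschitzOnWith K c (t ∩ Ω)
  c_nonpos : ∀ x ∈ Ω, c x ≤ 0
  posdef : ∀ x ∈ Ω, ∀ v : Fin k → ℝ, v ≠ 0 → 0 < ∑ i, ∑ j, a i j x * v i * v j

/-- The action of the operator `L` on a function `u`. -/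
def EllipticOp.app {k : ℕ} {Ω : Set (Euc k)} (L : EllipticOp k Ω)
    (u : Euc k → ℝ) (x : Euc k) : ℝ :=
  (∑ i, ∑ j, L.a i j x *
      MixedDeriv2 u (EuclideanSpace.single i 1) (EuclideanSpace.single j 1) x) +
    (∑ i, L.b i x * fderiv ℝ u x (EuclideanSpace.single i 1)) + L.c x * u x

/-- `u` is `L`-harmonic on the open set `U ⊆ Ω` : `u ∈ C²(U)` and `L u = 0` on `U`. -/
def LHarmOn {k : ℕ} {Ω : Set (Euc k)} (L : EllipticOp k Ω)
    (u : Euc k → ℝ) (U : Set (Euc k)) : Prop :=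
  U ⊆ Ω ∧ IsOpen U ∧ ContDiffOn ℝ 2 u U ∧ ∀ x ∈ U, L.app u x = 0

/-- `u : Euc k → EReal` is `L`-superharmonic on the open set `W ⊆ Ω`
(comparison characterization of the lower semicontinuous distributional
solutions of `L u ≤ 0`). -/
def LSuperharmOn {k : ℕ} {Ω : Set (Euc k)} (L : EllipticOp k Ω)
    (u : Euc k → EReal) (W : Set (Euc k)) : Prop :=
  W ⊆ Ω ∧ IsOpen W ∧ LowerSemicontinuousOn u W ∧ (∀ x ∈ W, u x ≠ ⊥) ∧
    (∀ x ∈ W, ∃ y ∈ connectedComponentIn W x, u y ≠ ⊤) ∧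
    ∀ (x : Euc k) (r : ℝ), 0 < r → closedBall x r ⊆ W →
      ∀ h : Euc k → ℝ, ContinuousOn h (closedBall x r) → LHarmOn L h (ball x r) →
        (∀ y ∈ sphere x r, (h y : EReal) ≤ u y) →
        ∀ y ∈ ball x r, (h y : EReal) ≤ u y

/-- There exists an `L`-superharmonic function `> 0` on `D` which is not `L`-harmonic. -/
def HasLPotentialOn {k : ℕ} {Ω : Set (Euc k)} (L : EllipticOp k Ω) (D : Set (Euc k)) : Prop :=
  ∃ u : Euc k → EReal, LSuperharmOn L u D ∧ (∀ x ∈ D, 0 < u x) ∧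
    ¬ ∃ v : Euc k → ℝ, LHarmOn L v D ∧ ∀ x ∈ D, u x = (v x : EReal)

/-- `K` is an `L`-Mergelyan set in the domain `D`. -/
def LMergelyan {k : ℕ} {Ω : Set (Euc k)} (L : EllipticOp k Ω) (D K : Set (Euc k)) : Prop :=
  IsCompact K ∧ K ⊆ D ∧
    ∀ u : Euc k → ℝ, ContinuousOn u K → LHarmOn L u (interior K) →
      ∀ ε : ℝ, 0 < ε → ∃ v : Euc k → ℝ, LHarmOn L v D ∧ ∀ x ∈ K, |v x - u x| < ε

/-- `S` is an `L`-Carleman set in the domain `D` (`S` is closed in `D`). -/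
def LCarleman {k : ℕ} {Ω : Set (Euc k)} (L : EllipticOp k Ω) (D S : Set (Euc k)) : Prop :=
  S ⊆ D ∧ closure S ∩ D ⊆ S ∧
    ∀ u : Euc k → ℝ, ContinuousOn u S → LHarmOn L u (interior S) →
      ∀ ε : Euc k → ℝ, ContinuousOn ε S → (∀ x ∈ S, ε x ∈ Ioc (0:ℝ) 1) →
        ∃ v : Euc k → ℝ, LHarmOn L v D ∧ ∀ x ∈ S, |v x - u x| < ε x

/-- `C` is a chaplet in the domain `D`: the union of a locally finite (in `D`) family of
pairwise disjoint, connected, compact `L`-Mergelyan sets contained in `D`, whose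
complements in `ℝᵏ` are connected. -/
def LChaplet {k : ℕ} {Ω : Set (Euc k)} (L : EllipticOp k Ω) (D C : Set (Euc k)) : Prop :=
  ∃ 𝒬 : Set (Set (Euc k)),
    C = ⋃₀ 𝒬 ∧
    (∀ x ∈ D, ∃ t ∈ 𝓝 x, {q ∈ 𝒬 | (q ∩ t).Nonempty}.Finite) ∧
    (𝒬.Pairwise Disjoint) ∧
    ∀ q ∈ 𝒬, IsCompact q ∧ IsConnected q ∧ q ⊆ D ∧ IsConnected qᶜ ∧ LMergelyan L D q

/-- The union of `F` with all of its holes (the bounded components of `D \ F`),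
relative to the domain `D`. -/
def hullIn {k : ℕ} (D F : Set (Euc k)) : Set (Euc k) :=
  F ∪ {x | x ∈ D \ F ∧ IsCompact (closure (connectedComponentIn (D \ F) x)) ∧
        closure (connectedComponentIn (D \ F) x) ⊆ D}


/-!
Reparametrize each ray by `s ∈ [0, 1) ↦ tan (s · arctan R(θ)) • θ`. Strict starlikeness of the open
set `U` makes `θ ↦ arctan R(θ)` continuous, so each `θ ↦ Ψ (tan (s · arctan R(θ)) • θ)` is
continuous, and the radial limit is the limit of this family as `s ↑ 1`. Along a countably
generated filter, the `limsup` of a family of continuous functions is a countable infimum of lower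
semicontinuous functions (dually for `liminf`), so the set `{limsup ≤ liminf}` where the limit
exists is Borel; along a sequence `sⱼ ↑ 1` the continuous functions converge to the limit there.
-/

section EventuallyContinuous

variable {X ι α : Type*} [TopologicalSpace X] [MeasurableSpace X] [OpensMeasurableSpace X]
  [CompleteLinearOrder α] [TopologicalSpace α] [OrderTopology α] [SecondCountableTopology α]
  [MeasurableSpace α] [BorelSpace α] {l : Filter ι} [l.IsCountablyGenerated] {G : X → ι → α}

theorem measurable_limsup_of_eventually_continuous (hG : ∀ᶠ i in l, Continuous fun x => G x i) :
    Measurable fun x => limsup (G x) l := by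
  obtain ⟨t, ht⟩ := l.exists_antitone_basis
  have hb := ht.toHasBasis.inf_principal {i | Continuous fun x => G x i}
  rw [inf_of_le_left (le_principal_iff.2 hG)] at hb
  simp only [hb.limsup_eq_iInf_iSup, ciInf_pos trivial]
  exact .iInf fun n => (lowerSemicontinuous_biSup fun i hi => hi.2.lowerSemicontinuous).measurable

theorem measurable_liminf_of_eventually_continuous (hG : ∀ᶠ i in l, Continuous fun x => G x i) :
    Measurable fun x => liminf (G x) l :=
  measurable_limsup_of_eventually_continuous (α := αᵒᵈ) hG

theorem measurableSet_setOf_exists_tendsto_of_eventually_continuous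
    (hG : ∀ᶠ i in l, Continuous fun x => G x i) :
    MeasurableSet {x | ∃ c, Tendsto (G x) l (𝓝 c)} := by
  rcases l.eq_or_neBot with rfl | _
  · simp
  have hset : {x | ∃ c, Tendsto (G x) l (𝓝 c)} = {x | limsup (G x) l ≤ liminf (G x) l} := by
    ext x
    refine ⟨fun ⟨c, hc⟩ => (hc.limsup_eq.trans hc.liminf_eq.symm).le, fun h => ?_⟩
    exact ⟨_, tendsto_of_le_liminf_of_limsup_le h le_rfl⟩
  rw [hset]
  exact measurableSet_le (measurable_limsup_of_eventually_continuous hG)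
    (measurable_liminf_of_eventually_continuous hG)

end EventuallyContinuous

theorem exists_seq_continuous_tendsto_of_eventually_continuous {X ι α : Type*}
    [TopologicalSpace X] [TopologicalSpace α] {l : Filter ι} [l.IsCountablyGenerated] [l.NeBot]
    {G : X → ι → α} (hG : ∀ᶠ i in l, Continuous fun x => G x i) :
    ∃ g : ℕ → X → α, (∀ n, Continuous (g n)) ∧
      ∀ x c, Tendsto (G x) l (𝓝 c) → Tendsto (fun n => g n x) atTop (𝓝 c) := by
  obtain ⟨i, hi⟩ := l.exists_seq_tendsto
  obtain ⟨N, hN⟩ := eventually_atTop.1 (hi.eventually hG)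
  exact ⟨fun n x => G x (i (n + N)), fun n => hN _ (Nat.le_add_left N n),
    fun x c hc => (tendsto_add_atTop_iff_nat N).2 (hc.comp hi)⟩

section StrictStar

open Real

variable {k : ℕ} {U : Set (Euc k)} {θ : Euc k}

theorem IsStrictStar.zero_mem (hU : IsStrictStar U) : (0 : Euc k) ∈ U := by
  obtain ⟨p, hp⟩ := hU.2.1.nonempty
  simpa using hU.2.2 p (subset_closure hp) 0 le_rfl one_pos

theorem IsStrictStar.smul_mem_of_smul_mem_closure (hU : IsStrictStar U) {ρ x : ℝ}
    (hρ : ρ • θ ∈ closure U) (hx : 0 ≤ x) (hxρ : x < ρ) : x • θ ∈ U := by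
  have hρ0 : 0 < ρ := hx.trans_lt hxρ
  simpa [smul_smul, div_mul_cancel₀ _ hρ0.ne'] using
    hU.2.2 _ hρ (x / ρ) (div_nonneg hx hρ0.le) ((div_lt_one hρ0).2 hxρ)

/-- `arctan ∘ R`, with `arctan (+∞) = π / 2`: unlike `R`, it is real-valued and continuous. -/
def arctanRadial (U : Set (Euc k)) (θ : Euc k) : ℝ :=
  sSup (arctan '' {ρ : ℝ | 0 ≤ ρ ∧ ρ • θ ∈ U})

theorem bddAbove_image_arctan (s : Set ℝ) : BddAbove (arctan '' s) :=
  ⟨π / 2, by rintro _ ⟨x, -, rfl⟩; exact (arctan_lt_pi_div_two x).le⟩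

theorem arctan_le_arctanRadial {ρ : ℝ} (hρ0 : 0 ≤ ρ) (hρ : ρ • θ ∈ U) :
    arctan ρ ≤ arctanRadial U θ :=
  le_csSup (bddAbove_image_arctan _) ⟨ρ, ⟨hρ0, hρ⟩, rfl⟩

theorem arctanRadial_le_pi_div_two (U : Set (Euc k)) (θ : Euc k) : arctanRadial U θ ≤ π / 2 :=
  Real.sSup_le (by rintro _ ⟨x, -, rfl⟩; exact (arctan_lt_pi_div_two x).le) (by positivity)

theorem IsStrictStar.lt_arctanRadial_iff (hU : IsStrictStar U) {c : ℝ} :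
    c < arctanRadial U θ ↔ ∃ ρ, 0 ≤ ρ ∧ ρ • θ ∈ U ∧ c < arctan ρ := by
  have h0 : (0 : ℝ) ∈ {ρ : ℝ | 0 ≤ ρ ∧ ρ • θ ∈ U} := ⟨le_rfl, by simpa using hU.zero_mem⟩
  rw [arctanRadial, lt_csSup_iff (bddAbove_image_arctan _) ((nonempty_of_mem h0).image arctan)]
  simp [and_assoc]

theorem IsStrictStar.arctanRadial_pos (hU : IsStrictStar U) : 0 < arctanRadial U θ := by
  have hsmul : Tendsto (fun t : ℝ => t • θ) (𝓝[>] 0) (𝓝 0) := by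
    simpa using (tendsto_nhdsWithin_of_tendsto_nhds (tendsto_id (x := 𝓝 (0 : ℝ)))).smul_const θ
  obtain ⟨t, ht, ht0⟩ :=
    ((hsmul.eventually (hU.1.mem_nhds hU.zero_mem)).and self_mem_nhdsWithin).exists
  exact hU.lt_arctanRadial_iff.2 ⟨t, ht0.le, ht, by simpa using arctan_strictMono ht0⟩

theorem IsStrictStar.smul_mem_of_arctan_lt (hU : IsStrictStar U) {x : ℝ} (hx : 0 ≤ x)
    (h : arctan x < arctanRadial U θ) : x • θ ∈ U := by
  obtain ⟨ρ, -, hρ, hxρ⟩ := hU.lt_arctanRadial_iff.1 h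
  exact hU.smul_mem_of_smul_mem_closure (subset_closure hρ) hx (arctan_lt_arctan_iff.1 hxρ)

theorem IsStrictStar.arctan_le_of_smul_mem_closure (hU : IsStrictStar U) {r : ℝ} (hr0 : 0 < r)
    (hr : r • θ ∈ closure U) : arctan r ≤ arctanRadial U θ := by
  refine le_of_tendsto (continuous_arctan.continuousWithinAt (s := Iio r)) ?_
  filter_upwards [Ioo_mem_nhdsLT hr0] with x hx
  exact arctan_le_arctanRadial hx.1.le (hU.smul_mem_of_smul_mem_closure hr hx.1.le hx.2)

theorem IsStrictStar.continuous_arctanRadial (hU : IsStrictStar U) :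
    Continuous (arctanRadial U) := by
  refine continuous_iff_lower_upperSemicontinuous.2 ⟨fun θ₀ c hc => ?_, fun θ₀ c hc => ?_⟩
  · obtain ⟨ρ, hρ0, hρ, hcρ⟩ := hU.lt_arctanRadial_iff.1 hc
    filter_upwards [(hU.1.preimage (continuous_const_smul ρ)).mem_nhds hρ] with θ hθ
    exact hcρ.trans_le (arctan_le_arctanRadial hρ0 hθ)
  rcases lt_or_ge (π / 2) c with hc' | hc'
  · exact Eventually.of_forall fun θ => (arctanRadial_le_pi_div_two U θ).trans_lt hc'
  -- Between `arctan R(θ₀)` and `c` lies `arctan r` with `r θ₀ ∉ closure U`, an open condition.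
  obtain ⟨d, hd₀, hdc⟩ := exists_between hc
  have hd0 : 0 < d := hU.arctanRadial_pos.trans hd₀
  have harctan : arctan (tan d) = d := arctan_tan (by linarith [pi_pos]) (by linarith)
  have htan : 0 < tan d := tan_pos_of_pos_of_lt_pi_div_two hd0 (by linarith)
  have hout : tan d • θ₀ ∉ closure U := fun h =>
    (hU.arctan_le_of_smul_mem_closure htan h).not_gt (by rwa [harctan])
  filter_upwards [(isClosed_closure.isOpen_compl.preimage (continuous_const_smul _)).mem_nhds hout]
    with θ hθ
  have : ¬ arctan (tan d) < arctanRadial U θ := fun h =>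
    hθ (subset_closure (hU.smul_mem_of_arctan_lt htan.le h))
  linarith

theorem IsStrictStar.coe_lt_radialE_iff (hU : IsStrictStar U) {x : ℝ} :
    (x : EReal) < radialE U θ ↔ arctan x < arctanRadial U θ := by
  rw [radialE, lt_sSup_iff, hU.lt_arctanRadial_iff]
  simp [arctan_lt_arctan_iff, and_assoc]

theorem eventually_coe_lt_radialE : ∀ᶠ x : ℝ in radialFilter U θ, (x : EReal) < radialE U θ :=
  mem_inf_of_left (preimage_mem_comap self_mem_nhdsWithin)

theorem eventually_lt_of_coe_lt_radialE {y : ℝ} (hy : (y : EReal) < radialE U θ) :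
    ∀ᶠ x : ℝ in radialFilter U θ, y < x :=
  have : ∀ᶠ x : ℝ in radialFilter U θ, (y : EReal) < x :=
    mem_inf_of_left (preimage_mem_comap (mem_nhdsWithin_of_mem_nhds (lt_mem_nhds hy)))
  this.mono fun _ => EReal.coe_lt_coe_iff.1

theorem IsStrictStar.arctan_tan_mul_arctanRadial (hU : IsStrictStar U) {s : ℝ}
    (hs : s ∈ Ico 0 1) : arctan (tan (s * arctanRadial U θ)) = s * arctanRadial U θ := by
  have hT := hU.arctanRadial_pos (θ := θ)
  have hT' := arctanRadial_le_pi_div_two U θ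
  exact arctan_tan (by nlinarith [pi_pos, hs.1]) (by nlinarith [hs.2])

theorem IsStrictStar.tan_mul_arctanRadial_nonneg (hU : IsStrictStar U) {s : ℝ}
    (hs : s ∈ Ico 0 1) : 0 ≤ tan (s * arctanRadial U θ) :=
  tan_nonneg_of_nonneg_of_le_pi_div_two (mul_nonneg hs.1 hU.arctanRadial_pos.le)
    (by nlinarith [arctanRadial_le_pi_div_two U θ, hs.2, hU.arctanRadial_pos (θ := θ)])

theorem IsStrictStar.tan_mul_arctanRadial_smul_mem (hU : IsStrictStar U) {s : ℝ}
    (hs : s ∈ Ico 0 1) : tan (s * arctanRadial U θ) • θ ∈ U := by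
  refine hU.smul_mem_of_arctan_lt (hU.tan_mul_arctanRadial_nonneg hs) ?_
  rw [hU.arctan_tan_mul_arctanRadial hs]
  nlinarith [hs.2, hU.arctanRadial_pos (θ := θ)]

theorem IsStrictStar.tendsto_tan_mul_radialFilter (hU : IsStrictStar U) :
    Tendsto (fun s => tan (s * arctanRadial U θ)) (𝓝[<] 1) (radialFilter U θ) := by
  set T := arctanRadial U θ
  have hT : 0 < T := hU.arctanRadial_pos
  have hIco : ∀ᶠ s in 𝓝[<] (1 : ℝ), s ∈ Ico 0 1 := Ico_mem_nhdsLT zero_lt_one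
  have hlt : ∀ᶠ s in 𝓝[<] (1 : ℝ), ((tan (s * T) : ℝ) : EReal) < radialE U θ := by
    filter_upwards [hIco] with s hs
    rw [hU.coe_lt_radialE_iff, hU.arctan_tan_mul_arctanRadial hs]
    nlinarith [hs.2]
  have hmul : Tendsto (fun s => s * T) (𝓝[<] 1) (𝓝 T) := by
    simpa using tendsto_nhdsWithin_of_tendsto_nhds ((continuous_mul_const T).tendsto 1)
  refine tendsto_inf.2 ⟨tendsto_comap_iff.2 (tendsto_nhdsWithin_iff.2 ⟨?_, hlt⟩), ?_⟩
  · refine tendsto_order.2 ⟨fun c hc => ?_, fun c hc => hlt.mono fun s hs => hs.trans hc⟩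
    obtain ⟨y, hcy, hyR⟩ := EReal.lt_iff_exists_real_btwn.1 hc
    filter_upwards [hIco, hmul.eventually (lt_mem_nhds (hU.coe_lt_radialE_iff.1 hyR))]
      with s hs hys
    refine hcy.trans (EReal.coe_lt_coe_iff.2 ?_)
    rwa [← arctan_lt_arctan_iff, hU.arctan_tan_mul_arctanRadial hs]
  · exact tendsto_principal.2 (hIco.mono fun s hs => hU.tan_mul_arctanRadial_nonneg hs)

theorem IsStrictStar.tendsto_arctan_div_nhdsLT (hU : IsStrictStar U) :
    Tendsto (fun x => arctan x / arctanRadial U θ) (radialFilter U θ) (𝓝[<] 1) := by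
  set T := arctanRadial U θ
  have hT : 0 < T := hU.arctanRadial_pos
  have hlt : ∀ᶠ x in radialFilter U θ, arctan x / T < 1 :=
    eventually_coe_lt_radialE.mono fun x hx => (div_lt_one hT).2 (hU.coe_lt_radialE_iff.1 hx)
  refine tendsto_nhdsWithin_iff.2 ⟨tendsto_order.2 ⟨fun c hc => ?_, fun c hc => ?_⟩, hlt⟩
  · obtain ⟨d, hcd, hdT⟩ := exists_between (max_lt (mul_lt_of_lt_one_left hT hc) hT)
    have hd0 : 0 < d := (le_max_right _ _).trans_lt hcd
    have harctan : arctan (tan d) = d :=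
      arctan_tan (by linarith [pi_pos]) (by linarith [arctanRadial_le_pi_div_two U θ])
    filter_upwards [eventually_lt_of_coe_lt_radialE (hU.coe_lt_radialE_iff.2 (harctan ▸ hdT))]
      with x hx
    rw [lt_div_iff₀ hT]
    calc c * T ≤ max (c * T) 0 := le_max_left _ _
      _ < d := hcd
      _ = arctan (tan d) := harctan.symm
      _ < arctan x := arctan_strictMono hx
  · exact hlt.mono fun x hx => hx.trans hc

theorem IsStrictStar.radialFilter_eq_map (hU : IsStrictStar U) :
    radialFilter U θ = map (fun s => tan (s * arctanRadial U θ)) (𝓝[<] 1) := by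
  refine le_antisymm ?_ hU.tendsto_tan_mul_radialFilter
  have hinv : (fun s => tan (s * arctanRadial U θ)) ∘ (fun x => arctan x / arctanRadial U θ) =
      id := funext fun x => by simp [div_mul_cancel₀ _ hU.arctanRadial_pos.ne', tan_arctan]
  calc radialFilter U θ
      = map (fun s => tan (s * arctanRadial U θ))
          (map (fun x => arctan x / arctanRadial U θ) (radialFilter U θ)) := by
        rw [map_map, hinv, map_id]
    _ ≤ map (fun s => tan (s * arctanRadial U θ)) (𝓝[<] 1) :=
        map_mono hU.tendsto_arctan_div_nhdsLT

theorem IsStrictStar.continuous_comp_tan_mul_arctanRadial_smul {F : Type*} [TopologicalSpace F]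
    (hU : IsStrictStar U) {Ψ : Euc k → F} (hΨ : ContinuousOn Ψ U) {s : ℝ} (hs : s ∈ Ico 0 1) :
    Continuous fun θ => Ψ (tan (s * arctanRadial U θ) • θ) := by
  have htan : Continuous fun θ => tan (s * arctanRadial U θ) := by
    refine continuousOn_tan.comp_continuous (continuous_const.mul hU.continuous_arctanRadial)
      fun θ => (cos_pos_of_mem_Ioo ⟨?_, ?_⟩).ne'
    · nlinarith [pi_pos, hs.1, hU.arctanRadial_pos (θ := θ)]
    · nlinarith [hs.2, hU.arctanRadial_pos (θ := θ), arctanRadial_le_pi_div_two U θ]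
  exact hΨ.comp_continuous (htan.smul continuous_id) fun θ => hU.tan_mul_arctanRadial_smul_mem hs

end StrictStar

theorem radial_limit_set_measurable_baire_general
    (n : ℕ) (U : Set (Euc n)) (hU : IsStrictStar U)
    (Ψ : Euc n → ℝ) (hΨ : ContinuousOn Ψ U)
    (A : Set ↥(sphere (0 : Euc n) 1))
    (hA : A = {θ : ↥(sphere (0 : Euc n) 1) | ∃ l : EReal,
      Tendsto (fun ρ : ℝ => ((Ψ (ρ • (θ : Euc n)) : ℝ) : EReal))
        (radialFilter U (θ : Euc n)) (𝓝 l)}) :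
    MeasurableSet A ∧
      ∃ Ψs : ↥(sphere (0 : Euc n) 1) → EReal,
        (∀ θ ∈ A, Tendsto (fun ρ : ℝ => ((Ψ (ρ • (θ : Euc n)) : ℝ) : EReal))
          (radialFilter U (θ : Euc n)) (𝓝 (Ψs θ))) ∧
        ∃ g : ℕ → ↥(sphere (0 : Euc n) 1) → EReal,
          (∀ j, ContinuousOn (g j) A) ∧
          ∀ θ ∈ A, Tendsto (fun j => g j θ) atTop (𝓝 (Ψs θ)) := by
  set G : sphere (0 : Euc n) 1 → ℝ → EReal :=
    fun θ s => Ψ (Real.tan (s * arctanRadial U θ) • (θ : Euc n))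
  have hG : ∀ᶠ s in 𝓝[<] (1 : ℝ), Continuous fun θ => G θ s := by
    filter_upwards [Ico_mem_nhdsLT zero_lt_one] with s hs
    exact continuous_coe_real_ereal.comp
      ((hU.continuous_comp_tan_mul_arctanRadial_smul hΨ hs).comp continuous_subtype_val)
  have hradial (θ : sphere (0 : Euc n) 1) (l : EReal) :
      Tendsto (fun ρ : ℝ => ((Ψ (ρ • (θ : Euc n)) : ℝ) : EReal)) (radialFilter U θ) (𝓝 l) ↔
        Tendsto (G θ) (𝓝[<] 1) (𝓝 l) := by
    rw [hU.radialFilter_eq_map, tendsto_map'_iff]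
    rfl
  have hA' : A = {θ | ∃ l, Tendsto (G θ) (𝓝[<] 1) (𝓝 l)} := by simp only [hA, hradial]
  have hlimsup : ∀ θ ∈ A, Tendsto (G θ) (𝓝[<] 1) (𝓝 (limsup (G θ) (𝓝[<] 1))) := by
    rintro θ hθ
    obtain ⟨l, hl⟩ := hA' ▸ hθ
    rwa [hl.limsup_eq]
  obtain ⟨g, hg, hgG⟩ := exists_seq_continuous_tendsto_of_eventually_continuous hG
  exact ⟨hA' ▸ measurableSet_setOf_exists_tendsto_of_eventually_continuous hG,
    fun θ => limsup (G θ) (𝓝[<] 1), fun θ hθ => (hradial θ _).2 (hlimsup θ hθ),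
    g, fun j => (hg j).continuousOn, fun θ hθ => hgG θ _ (hlimsup θ hθ)⟩

/-- For a continuous `Ψ : U → ℝ` on a strictly starlike domain `U`, the
set `A ⊆ S^{n-1}` of directions along which the radial limit `Ψ*(θ) ∈ [-∞, +∞]` exists is
Borel measurable, and `Ψ* : A → [-∞, +∞]` is of Baire class `0` or `1` (a pointwise limit
on `A` of functions continuous on `A`). -/
theorem radial_limit_set_measurable_baire
    (n : ℕ) (hn : 2 ≤ n) (U : Set (Euc n)) (hU : IsStrictStar U)
    (Ψ : Euc n → ℝ) (hΨ : ContinuousOn Ψ U)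
    (A : Set ↥(sphere (0 : Euc n) 1))
    (hA : A = {θ : ↥(sphere (0 : Euc n) 1) | ∃ l : EReal,
      Tendsto (fun ρ : ℝ => ((Ψ (ρ • (θ : Euc n)) : ℝ) : EReal))
        (radialFilter U (θ : Euc n)) (𝓝 l)}) :
    MeasurableSet A ∧
      ∃ Ψs : ↥(sphere (0 : Euc n) 1) → EReal,
        (∀ θ ∈ A, Tendsto (fun ρ : ℝ => ((Ψ (ρ • (θ : Euc n)) : ℝ) : EReal))
          (radialFilter U (θ : Euc n)) (𝓝 (Ψs θ))) ∧
        ∃ g : ℕ → ↥(sphere (0 : Euc n) 1) → EReal,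
          (∀ j, ContinuousOn (g j) A) ∧
          ∀ θ ∈ A, Tendsto (fun j => g j θ) atTop (𝓝 (Ψs θ)) :=
  radial_limit_set_measurable_baire_general n U hU Ψ hΨ A hA
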